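/- arXiv:1812.03460 — 7 statements merged into one kernel-verified Lean document; each statement's English description precedes it below -/
import Mathlib

section
/- Let D > 1 be squarefree, δ and ξ as determined by the congruence class of D mod 4, with Δ the discriminant (Δ = 4D if D ≡ 2,3 mod 4; Δ = D if D ≡ 1 mod 4), δ_i = p_i + q_i δ the convergent elements, N_i = |N(δ_i)| = (-1)^{i+1} N(δ_i), and c_{i+1} = [u_{i+1}, u_{i+2}, ...] the complete quotients of ξ. Then for each i ≥ 0, N_i = √Δ / c_{i+1} - N_{i-1} / c_{i+1}². -/
/-!
Write `B i = P i - Q i * ξ = P i + Q i * δ'`, so that `P i + Q i * δ = B i + Q i * √Δ` and the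
`i`-th norm is `B i * (B i + Q i * √Δ)`. Unwinding `c j = u j + 1 / c (j + 1)` gives
`c (i + 1) * B (i + 1) = -B i`, and the convergent determinant gives
`Q (i + 1) * B i - B (i + 1) * Q i = (-1) ^ i`. Eliminating `B i` with the first identity, the
recurrence becomes the second one; nothing is used about `√Δ` beyond its being `δ - δ'`.
-/

section ContinuedFraction

theorem convergent_det {R : Type*} [CommRing R] {a P Q : ℕ → R}
    (hP0 : P 0 = 1) (hQ0 : Q 0 = 0) (hQ1 : Q 1 = 1)
    (hPrec : ∀ i, P (i + 2) = a (i + 1) * P (i + 1) + P i)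
    (hQrec : ∀ i, Q (i + 2) = a (i + 1) * Q (i + 1) + Q i) (i : ℕ) :
    Q (i + 1) * P i - P (i + 1) * Q i = (-1) ^ i := by
  induction i with
  | zero => simp [hP0, hQ0, hQ1]
  | succ n ih =>
    rw [hPrec n, hQrec n, pow_succ]
    linear_combination -ih

variable {K : Type*} [Field K] {a c P Q : ℕ → K}
  (hc : ∀ j, c j = a j + 1 / c (j + 1)) (hcne : ∀ j, c j ≠ 0)
  (hP0 : P 0 = 1) (hQ0 : Q 0 = 0) (hP1 : P 1 = a 0) (hQ1 : Q 1 = 1)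
  (hPrec : ∀ i, P (i + 2) = a (i + 1) * P (i + 1) + P i)
  (hQrec : ∀ i, Q (i + 2) = a (i + 1) * Q (i + 1) + Q i)
include hc hcne hP0 hQ0 hP1 hQ1 hPrec hQrec

theorem complete_quotient_mul_convergent_sub (i : ℕ) :
    c (i + 1) * (P (i + 1) - Q (i + 1) * c 0) = -(P i - Q i * c 0) := by
  induction i with
  | zero =>
    have h := hc 0
    have := hcne 1
    rw [hP1, hQ1, hP0, hQ0]
    field_simp at h ⊢
    linear_combination -h
  | succ n ih =>
    have h := hc (n + 1)
    have := hcne (n + 2)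
    rw [hPrec n, hQrec n]
    field_simp at h
    linear_combination c (n + 2) * ih - (P (n + 1) - Q (n + 1) * c 0) * h

theorem convergent_norm_recurrence (s : K) (i : ℕ) :
    (-1) ^ (i + 1) * ((P (i + 1) + Q (i + 1) * (s - c 0)) * (P (i + 1) + Q (i + 1) * -c 0))
      = s / c (i + 1)
        - (-1) ^ i * ((P i + Q i * (s - c 0)) * (P i + Q i * -c 0)) / c (i + 1) ^ 2 := by
  have hB := complete_quotient_mul_convergent_sub hc hcne hP0 hQ0 hP1 hQ1 hPrec hQrec i
  have hdet := convergent_det hP0 hQ0 hQ1 hPrec hQrec i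
  have hsign : ((-1 : K) ^ i) ^ 2 = 1 := by rw [← pow_mul, mul_comm, pow_mul]; norm_num
  have := hcne (i + 1)
  field_simp
  linear_combination
    ((-1) ^ i * ((P i - Q i * c 0) - c (i + 1) * (P (i + 1) - Q (i + 1) * c 0))
        + (-1) ^ i * Q i * s - (-1) ^ i * c (i + 1) * s * Q (i + 1)) * hB
      + ((-1) ^ i * c (i + 1) * s) * hdet + (c (i + 1) * s) * hsign

end ContinuedFraction

theorem Ni_recurrence_general (D : ℤ)
    (δ δ' ξ Δ : ℝ)
    (hcase :
      (D % 4 = 1 ∧ δ = (1 + Real.sqrt D) / 2 ∧ δ' = (1 - Real.sqrt D) / 2 ∧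
        ξ = (Real.sqrt D - 1) / 2 ∧ Δ = D) ∨
      ((D % 4 = 2 ∨ D % 4 = 3) ∧ δ = Real.sqrt D ∧ δ' = -Real.sqrt D ∧
        ξ = Real.sqrt D ∧ Δ = 4 * D))
    (u : ℕ → ℕ) (hu : ∀ j, 0 < u j)
    (c : ℕ → ℝ)
    (hc0 : c 0 = ξ)
    (hc : ∀ j, c j = u j + 1 / c (j + 1))
    (hfloor : ∀ j, (u j : ℤ) = ⌊c j⌋)
    (P Q : ℕ → ℤ)
    (hP0 : P 0 = 1) (hQ0 : Q 0 = 0)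
    (hP1 : P 1 = u 0) (hQ1 : Q 1 = 1)
    (hPrec : ∀ i, P (i + 2) = u (i + 1) * P (i + 1) + P i)
    (hQrec : ∀ i, Q (i + 2) = u (i + 1) * Q (i + 1) + Q i) :
    ∀ i : ℕ,
      (-1 : ℝ) ^ (i + 1) * ((P (i + 1) + Q (i + 1) * δ) * (P (i + 1) + Q (i + 1) * δ'))
        = Real.sqrt Δ / c (i + 1)
          - ((-1 : ℝ) ^ i * ((P i + Q i * δ) * (P i + Q i * δ'))) / (c (i + 1)) ^ 2 := by
  have hδ' : δ' = -ξ := by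
    rcases hcase with ⟨-, -, h, hξ, -⟩ | ⟨-, -, h, hξ, -⟩ <;> rw [h, hξ]; ring
  have hδ : δ = Real.sqrt Δ - ξ := by
    rcases hcase with ⟨-, h, -, hξ, hΔ⟩ | ⟨-, h, -, hξ, hΔ⟩
    · rw [h, hξ, hΔ]; ring
    · have hsqrt4 : Real.sqrt 4 = 2 := by
        rw [show (4 : ℝ) = 2 ^ 2 by norm_num, Real.sqrt_sq zero_le_two]
      rw [h, hξ, hΔ, Real.sqrt_mul zero_le_four, hsqrt4]; ring
  have hcne : ∀ j, c j ≠ 0 := fun j =>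
    (one_pos.trans_le (Int.floor_pos.mp (hfloor j ▸ Int.natCast_pos.mpr (hu j)))).ne'
  subst hc0
  rw [hδ, hδ']
  exact convergent_norm_recurrence (a := fun j => (u j : ℝ))
    (P := fun i => (P i : ℝ)) (Q := fun i => (Q i : ℝ)) hc hcne
    (by exact_mod_cast hP0) (by exact_mod_cast hQ0) (by exact_mod_cast hP1)
    (by exact_mod_cast hQ1) (fun i => by exact_mod_cast hPrec i)
    (fun i => by exact_mod_cast hQrec i) _

/-- For D > 1 squarefree, with δ, ξ, Δ determined by D mod 4 (δ = ξ = √D and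
Δ = 4D if D ≡ 2,3 mod 4; δ = (1+√D)/2, ξ = (√D-1)/2, Δ = D if D ≡ 1 mod 4),
δ' the conjugate of δ, c_j = [u_j, u_{j+1}, ...] the complete quotients of ξ
(c_0 = ξ), and convergents shifted so that `P (i+1)` is `p_i`,
N_i = (-1)^{i+1} (p_i + q_i δ)(p_i + q_i δ') satisfies
N_i = √Δ / c_{i+1} - N_{i-1} / c_{i+1}² for all i ≥ 0. -/
theorem Ni_recurrence (D : ℤ) (hD : 1 < D) (hsf : Squarefree D)
    (δ δ' ξ Δ : ℝ)
    (hcase :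
      (D % 4 = 1 ∧ δ = (1 + Real.sqrt D) / 2 ∧ δ' = (1 - Real.sqrt D) / 2 ∧
        ξ = (Real.sqrt D - 1) / 2 ∧ Δ = D) ∨
      ((D % 4 = 2 ∨ D % 4 = 3) ∧ δ = Real.sqrt D ∧ δ' = -Real.sqrt D ∧
        ξ = Real.sqrt D ∧ Δ = 4 * D))
    (u : ℕ → ℕ) (hu : ∀ j, 0 < u j)
    (c : ℕ → ℝ)
    (hc0 : c 0 = ξ)
    (hc : ∀ j, c j = u j + 1 / c (j + 1))
    (hfloor : ∀ j, (u j : ℤ) = ⌊c j⌋)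
    (P Q : ℕ → ℤ)
    (hP0 : P 0 = 1) (hQ0 : Q 0 = 0)
    (hP1 : P 1 = u 0) (hQ1 : Q 1 = 1)
    (hPrec : ∀ i, P (i + 2) = u (i + 1) * P (i + 1) + P i)
    (hQrec : ∀ i, Q (i + 2) = u (i + 1) * Q (i + 1) + Q i) :
    ∀ i : ℕ,
      (-1 : ℝ) ^ (i + 1) * ((P (i + 1) + Q (i + 1) * δ) * (P (i + 1) + Q (i + 1) * δ'))
        = Real.sqrt Δ / c (i + 1)
          - ((-1 : ℝ) ^ i * ((P i + Q i * δ) * (P i + Q i * δ'))) / (c (i + 1)) ^ 2 :=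
  Ni_recurrence_general D δ δ' ξ Δ hcase u hu c hc0 hc hfloor P Q hP0 hQ0 hP1 hQ1 hPrec hQrec
end

section
/- Let D > 1 be squarefree with √Δ > 2 (Δ the discriminant), c_j the complete quotients of ξ, and N_i the absolute norms of the convergent elements satisfying N_i = √Δ/c_{i+1} - N_{i-1}/c_{i+1}² with N_{-1} = 1. Then for every i ≥ 0, N_i > √Δ / (c_{i+1} + 1). -/
/-!
Substituting the recurrence, a short computation turns the claim into `N_{i-1} < √Δ c_{i+1} / (c_{i+1} + 1)`.
For `i = 0` this is `1 < √Δ c_1 / (c_1 + 1)`, true as `√Δ > 2` and `c_1 > 1`. For `i ≥ 1`,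
positivity of `N_{i-2}` gives `N_{i-1} < √Δ / c_i`, and `c_i = u_i + 1/c_{i+1} ≥ (c_{i+1} + 1) / c_{i+1}`.
-/

theorem div_add_one_lt_div_sub_div_sq_iff {s x c : ℝ} (hc : 0 < c) :
    s / (c + 1) < s / c - x / c ^ 2 ↔ x < s * c / (c + 1) := by
  have hc1 : 0 < c + 1 := by linarith
  rw [← sub_pos, ← sub_pos (a := s * c / (c + 1))]
  have key : s / c - x / c ^ 2 - s / (c + 1) = (s * c / (c + 1) - x) / c ^ 2 := by
    field_simp
    ring
  rw [key]
  exact div_pos_iff_of_pos_right (by positivity)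

theorem one_lt_mul_div_add_one {s c : ℝ} (hs : 2 < s) (hc : 1 < c) : 1 < s * c / (c + 1) := by
  rw [one_lt_div (by linarith)]
  nlinarith

theorem div_le_mul_div_add_one_of_eq_add_inv {s u c c' : ℝ} (hs : 0 ≤ s) (hu : 1 ≤ u)
    (hc' : 0 < c') (h : c = u + 1 / c') : s / c ≤ s * c' / (c' + 1) := by
  have hinv : c' / (c' + 1) = 1 / (1 + 1 / c') := by field_simp
  rw [mul_div_assoc, hinv, ← mul_one_div s c, h]
  gcongr

theorem Ni_lower_bound_strong_general (Δ : ℝ) (hΔ2 : 2 < Real.sqrt Δ)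
    (u : ℕ → ℕ) (hu : ∀ j, 0 < u j)
    (c : ℕ → ℝ) (hc1 : ∀ j, 1 < c j)
    (hc : ∀ j, c j = u j + 1 / c (j + 1))
    (N : ℕ → ℝ) (hN0 : N 0 = 1)
    (hNrec : ∀ i, N (i + 1) = Real.sqrt Δ / c (i + 1) - N i / (c (i + 1)) ^ 2)
    (hNpos : ∀ i, 0 < N i) :
    ∀ i : ℕ, N (i + 1) > Real.sqrt Δ / (c (i + 1) + 1) := by
  have hcpos : ∀ j, 0 < c j := fun j => one_pos.trans (hc1 j)
  intro i
  rw [gt_iff_lt, hNrec, div_add_one_lt_div_sub_div_sq_iff (hcpos _)]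
  cases i with
  | zero => simpa only [hN0] using one_lt_mul_div_add_one hΔ2 (hc1 1)
  | succ i =>
    calc N (i + 1) = Real.sqrt Δ / c (i + 1) - N i / c (i + 1) ^ 2 := hNrec i
      _ < Real.sqrt Δ / c (i + 1) := sub_lt_self _ (div_pos (hNpos i) (pow_pos (hcpos _) 2))
      _ ≤ _ := div_le_mul_div_add_one_of_eq_add_inv (Real.sqrt_nonneg Δ)
          (by exact_mod_cast hu (i + 1)) (hcpos _) (hc (i + 1))

/-- If moreover √Δ > 2, then (with `N (i+1)` playing the role of N_i, so
`N 0 = N_{-1} = 1`) for every i ≥ 0, N_i > √Δ / (c_{i+1} + 1). -/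
theorem Ni_lower_bound_strong (Δ : ℝ) (hΔ : 0 < Δ) (hΔ2 : 2 < Real.sqrt Δ)
    (u : ℕ → ℕ) (hu : ∀ j, 0 < u j)
    (c : ℕ → ℝ) (hc1 : ∀ j, 1 < c j)
    (hc : ∀ j, c j = u j + 1 / c (j + 1))
    (N : ℕ → ℝ) (hN0 : N 0 = 1)
    (hNrec : ∀ i, N (i + 1) = Real.sqrt Δ / c (i + 1) - N i / (c (i + 1)) ^ 2)
    (hNpos : ∀ i, 0 < N i) :
    ∀ i : ℕ, N (i + 1) > Real.sqrt Δ / (c (i + 1) + 1) :=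
  Ni_lower_bound_strong_general Δ hΔ2 u hu c hc1 hc N hN0 hNrec hNpos
end

section
/- For each i ≥ 0, N_i / c_{i+2} < √Δ / 2, where N_i satisfies N_i = √Δ/c_{i+1} - N_{i-1}/c_{i+1}², c_j = u_j + 1/c_{j+1} with positive integers u_j, and c_j > 1. -/
/-- With `N (i+1)` playing the role of N_i (so `N 0 = N_{-1} = 1`), for each
i ≥ 0 one has N_i / c_{i+2} < √Δ / 2. -/
theorem Ni_div_c_bound (Δ : ℝ) (hΔ : 0 < Δ)
    (u : ℕ → ℕ) (hu : ∀ j, 0 < u j)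
    (c : ℕ → ℝ) (hc1 : ∀ j, 1 < c j)
    (hc : ∀ j, c j = u j + 1 / c (j + 1))
    (N : ℕ → ℝ) (hN0 : N 0 = 1)
    (hNrec : ∀ i, N (i + 1) = Real.sqrt Δ / c (i + 1) - N i / (c (i + 1)) ^ 2)
    (hNpos : ∀ i, 0 < N i) :
    ∀ i : ℕ, N (i + 1) / c (i + 2) < Real.sqrt Δ / 2 := by
  intro i
  have hs : 0 < Real.sqrt Δ := Real.sqrt_pos.mpr hΔ
  have h1 : (1:ℝ) < c (i+1) := hc1 _
  have h2 : (1:ℝ) < c (i+2) := hc1 _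
  have hc1p : (0:ℝ) < c (i+1) := by linarith
  have hc2p : (0:ℝ) < c (i+2) := by linarith
  have hub : N (i+1) < Real.sqrt Δ / c (i+1) := by
    rw [hNrec i]
    have hNi := hNpos i
    have hpos : 0 < N i / (c (i+1))^2 := by positivity
    linarith
  have hprod : 2 < c (i+1) * c (i+2) := by
    have h := hc (i+1)
    have hu1 : (1:ℝ) ≤ u (i+1) := by exact_mod_cast hu (i+1)
    have hge : c (i+1) ≥ 1 + 1 / c (i+2) := by rw [h]; linarith
    have h1c : 1 / c (i+2) * c (i+2) = 1 := by field_simp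
    nlinarith
  calc N (i+1) / c (i+2) < (Real.sqrt Δ / c (i+1)) / c (i+2) := by gcongr
    _ = Real.sqrt Δ / (c (i+1) * c (i+2)) := by rw [div_div]
    _ < Real.sqrt Δ / 2 := by
        apply div_lt_div_of_pos_left hs (by norm_num) hprod
end

section
/- Let i be odd, δ_{i,r} = δ_i + r δ_{i+1} with N(δ_{i+1}) < 0, N_{i+1} = |N(δ_{i+1})|. Then N(δ_{i,r}) = [(δ - δ')² - (T_{i+1}^{(a)} + T_{i+1}^{(b)} + 2r N(δ_{i+1}))²] / (4 N_{i+1}). -/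
/-- For i odd, δ_{i,r} = δ_i + r δ_{i+1} with N(δ_{i+1}) < 0 and
N_{i+1} = |N(δ_{i+1})| = -N(δ_{i+1}), one has
N(δ_{i,r}) = [(δ - δ')² - (T_{i+1}^{(a)} + T_{i+1}^{(b)} + 2r N(δ_{i+1}))²] / (4 N_{i+1}). -/
theorem norm_semiconvergent_formula (δ δ' : ℝ) (i : ℕ) (hi : Odd i)
    (pi pi1 qi qi1 r : ℤ)
    (hdet : pi1 * qi - pi * qi1 = (-1) ^ i)
    (hneg : ((pi1 : ℝ) + qi1 * δ) * ((pi1 : ℝ) + qi1 * δ') < 0) :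
    ((pi : ℝ) + qi * δ + r * ((pi1 : ℝ) + qi1 * δ)) *
        ((pi : ℝ) + qi * δ' + r * ((pi1 : ℝ) + qi1 * δ'))
      = ((δ - δ') ^ 2
          - ((((pi1 : ℝ) * pi + pi1 * qi * (δ + δ') + qi1 * qi * (δ * δ'))
              + ((pi1 : ℝ) * pi + pi * qi1 * (δ + δ') + qi1 * qi * (δ * δ')))
            + 2 * r * (((pi1 : ℝ) + qi1 * δ) * ((pi1 : ℝ) + qi1 * δ'))) ^ 2)
        / (4 * (-(((pi1 : ℝ) + qi1 * δ) * ((pi1 : ℝ) + qi1 * δ')))) := by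
  have hd : (pi1 : ℝ) * qi - pi * qi1 = -1 := by
    have : ((pi1 * qi - pi * qi1 : ℤ) : ℝ) = ((-1 : ℤ) : ℝ) := by
      rw [hdet]; push_cast [hi.neg_one_pow]; ring
    push_cast at this; linarith
  rw [eq_div_iff (by nlinarith)]
  linear_combination ((δ - δ') ^ 2 * (((pi1 : ℝ) * qi - pi * qi1) - 1)) * hd
end

section
/- Let i be odd with N_{i+1} > 0 satisfying (from Lemma bounds) √Δ/(c_{i+2}+1) < N_{i+1} < √Δ/c_{i+2}, and set S = T_{i+1}^{(a)} + T_{i+1}^{(b)} = -√Δ + 2 c_{i+2} N_{i+1}. Then |S/(2N_{i+1}) - u_{i+2}/2| < 1/2, where u_{i+2} = c_{i+2} - 1/c_{i+3}. -/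
/-- With N_{i+1} satisfying the two-sided bounds, u_{i+2} = c_{i+2} - 1/c_{i+3}
a positive integer, and S = T_{i+1}^{(a)} + T_{i+1}^{(b)} = -√Δ + 2 c_{i+2} N_{i+1},
one has |S/(2 N_{i+1}) - u_{i+2}/2| < 1/2. -/
theorem half_integer_bound (Δ c1 c2 c3 N1 : ℝ) (u : ℕ)
    (hΔ : 0 < Δ) (hc1 : 1 < c1) (hc2 : 1 < c2) (hc3 : 1 < c3)
    (hu : 0 < u) (huc : (u : ℝ) = c2 - 1 / c3)
    (hc12 : c2 + 1 ≤ c1 * c2)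
    (hlow : Real.sqrt Δ / c2 * (1 - 1 / (c1 * c2)) < N1)
    (hup : N1 < Real.sqrt Δ / c2)
    (hlow2 : Real.sqrt Δ / (c2 + 1) < N1) :
    |(-Real.sqrt Δ + 2 * c2 * N1) / (2 * N1) - (u : ℝ) / 2| < 1 / 2 := by
  set s := Real.sqrt Δ with hs
  have hs0 : 0 < s := Real.sqrt_pos.mpr hΔ
  have hc20 : 0 < c2 := by linarith
  have hc30 : 0 < c3 := by linarith
  have hN : 0 < N1 := lt_trans (by positivity) hlow2
  have h2N : 0 < 2 * N1 := by linarith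
  have hupp : c2 * N1 < s := by
    have := (lt_div_iff₀ hc20).mp hup
    linarith
  have hloww : s < (c2 + 1) * N1 := by
    have := (div_lt_iff₀ (by linarith : (0:ℝ) < c2 + 1)).mp hlow2
    linarith
  have hinv : 0 < N1 / c3 := by positivity
  have hinv2 : N1 / c3 < N1 := by
    rw [div_lt_iff₀ hc30]; nlinarith
  have key : (-s + 2 * c2 * N1) / (2 * N1) - (u : ℝ) / 2
      = (-s + c2 * N1 + N1 / c3) / (2 * N1) := by
    rw [huc]; field_simp; ring
  rw [key, abs_lt]
  constructor
  · rw [lt_div_iff₀ h2N]; nlinarith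
  · rw [div_lt_iff₀ h2N]; nlinarith
end

section
/- Suppose i is odd and u_{i+2} is even, with M_i = N(δ_{i, u_{i+2}/2}) given by 4M_i = u_{i+2}² N_{i+1} + 2(N_{i+2} + N_i), where the N_j satisfy the standard recurrence and the bounds √Δ/(c_{j+1}+1) < N_j < √Δ/c_{j+1}. Then (c_{i+2} - 1) √Δ/4 < M_i < (c_{i+2} + 1) √Δ/4. -/
/-- For i odd with u_{i+2} even, and M_i defined by
4 M_i = u_{i+2}² N_{i+1} + 2(N_{i+2} + N_i), where the N_j satisfy the standard
recurrence and bounds √Δ/(c_{j+1}+1) < N_j < √Δ/c_{j+1} (here `N (j+1)` plays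
the role of N_j), one has (c_{i+2} - 1)√Δ/4 < M_i < (c_{i+2} + 1)√Δ/4. -/
theorem Mi_bounds_even (Δ : ℝ) (hΔ : 0 < Δ)
    (u : ℕ → ℕ) (hu : ∀ j, 0 < u j)
    (c : ℕ → ℝ) (hc1 : ∀ j, 1 < c j)
    (hc : ∀ j, c j = u j + 1 / c (j + 1))
    (N : ℕ → ℝ) (hN0 : N 0 = 1) (hNpos : ∀ j, 0 < N j)
    (hNrec : ∀ j, N (j + 1) = Real.sqrt Δ / c (j + 1) - N j / (c (j + 1)) ^ 2)
    (hNbnd : ∀ j, Real.sqrt Δ / (c (j + 1) + 1) < N (j + 1) ∧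
      N (j + 1) < Real.sqrt Δ / c (j + 1))
    (i : ℕ) (hi : Odd i) (hueven : Even (u (i + 2)))
    (M : ℝ)
    (hM : 4 * M = (u (i + 2) : ℝ) ^ 2 * N (i + 2) + 2 * (N (i + 3) + N (i + 1))) :
    (c (i + 2) - 1) * Real.sqrt Δ / 4 < M ∧ M < (c (i + 2) + 1) * Real.sqrt Δ / 4 := by
  set s := Real.sqrt Δ with hs_def
  have hs : 0 < s := Real.sqrt_pos.mpr hΔ
  set a := c (i + 2) with ha_def
  set b := c (i + 3) with hb_def
  have ha : 1 < a := hc1 (i + 2)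
  have hb : 1 < b := hc1 (i + 3)
  have ha0 : a ≠ 0 := by linarith
  have hb0 : b ≠ 0 := by linarith
  set n := N (i + 2) with hn_def
  have hbnd := hNbnd (i + 1)
  have hlo : s / (a + 1) < n := hbnd.1
  have hhi : n < s / a := hbnd.2
  have hu_eq : (u (i + 2) : ℝ) = a - 1 / b := by
    have := hc (i + 2); rw [← ha_def] at this; linarith [this]
  have hm : N (i + 1) = a * s - a ^ 2 * n := by
    have h := hNrec (i + 1)
    rw [← ha_def, ← hn_def] at h
    field_simp at h
    have hma : a * N (i + 1) = a * (a * s - a ^ 2 * n) := by linear_combination a * h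
    exact mul_left_cancel₀ ha0 hma
  have h3 : N (i + 3) = s / b - n / b ^ 2 := hNrec (i + 2)
  set t := a + 1 / b with ht_def
  have key : 4 * M = t * (2 * s - t * n) := by
    rw [hM, hu_eq, hm, h3, ht_def]
    field_simp
    ring
  have hb1 : 1 / b < 1 := by rw [div_lt_one (by linarith)]; linarith
  have hb2 : 0 < 1 / b := by positivity
  have hta : a < t := by rw [ht_def]; linarith
  have hta1 : t < a + 1 := by rw [ht_def]; linarith
  have han : a * n < s := by
    rw [lt_div_iff₀ (by linarith : (0:ℝ) < a)] at hhi
    linarith [hhi]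
  have han2 : s < (a + 1) * n := by
    rw [div_lt_iff₀ (by linarith : (0:ℝ) < a + 1)] at hlo
    linarith [hlo]
  have hnpos : 0 < n := hNpos (i + 2)
  constructor
  · rw [div_lt_iff₀ (by norm_num : (0:ℝ) < 4)]
    have expand : a * (M * 4) - a * ((a - 1) * s) =
        t ^ 2 * (s - a * n) + s * (a - 1) + s * (a + 1 - t) * (1 + (t - a)) := by
      have : M * 4 = t * (2 * s - t * n) := by linarith [key]
      rw [this]; ring
    have h1 : 0 < t ^ 2 * (s - a * n) := by
      apply mul_pos (by positivity) (by linarith)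
    have h2 : 0 < s * (a - 1) := mul_pos hs (by linarith)
    have h3 : 0 < s * (a + 1 - t) * (1 + (t - a)) := by
      apply mul_pos (mul_pos hs (by linarith)) (by linarith)
    have hfin : 0 < a * (M * 4 - (a - 1) * s) := by
      have : a * (M * 4 - (a - 1) * s) = a * (M * 4) - a * ((a - 1) * s) := by ring
      rw [this, expand]; linarith
    rcases mul_pos_iff.mp hfin with ⟨_, h⟩ | ⟨h, _⟩
    · linarith
    · linarith
  · rw [lt_div_iff₀ (by norm_num : (0:ℝ) < 4)]
    have expand2 : (a + 1) * ((a + 1) * s - M * 4) =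
        t ^ 2 * ((a + 1) * n - s) + s * (a + 1 - t) ^ 2 := by
      have : M * 4 = t * (2 * s - t * n) := by linarith [key]
      rw [this]; ring
    have h1 : 0 < t ^ 2 * ((a + 1) * n - s) := by
      apply mul_pos (by positivity) (by linarith)
    have h2 : 0 ≤ s * (a + 1 - t) ^ 2 := by positivity
    have hfin : 0 < (a + 1) * ((a + 1) * s - M * 4) := by rw [expand2]; linarith
    rcases mul_pos_iff.mp hfin with ⟨_, h⟩ | ⟨h, _⟩
    · linarith
    · linarith
end

section
/- Suppose i is odd and u_{i+2} is odd, with 4M_i = 2((u_{i+2}+1)/u_{i+2}) N_i + (u_{i+2}² - 1) N_{i+1} + 2((u_{i+2}-1)/u_{i+2}) N_{i+2}. Then (c_{i+2} - 2) √Δ/4 < M_i < (c_{i+2} + 1) √Δ/4. -/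
set_option maxHeartbeats 1000000 in
/-- For i odd with u_{i+2} odd, and M_i given by
4 M_i = 2((u_{i+2}+1)/u_{i+2}) N_i + (u_{i+2}² - 1) N_{i+1}
        + 2((u_{i+2}-1)/u_{i+2}) N_{i+2}
(here `N (j+1)` plays the role of N_j), one has
(c_{i+2} - 2)√Δ/4 < M_i < (c_{i+2} + 1)√Δ/4. -/
theorem Mi_bounds_odd (Δ : ℝ) (hΔ : 0 < Δ)
    (u : ℕ → ℕ) (hu : ∀ j, 0 < u j)
    (c : ℕ → ℝ) (hc1 : ∀ j, 1 < c j)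
    (hc : ∀ j, c j = u j + 1 / c (j + 1))
    (N : ℕ → ℝ) (hN0 : N 0 = 1) (hNpos : ∀ j, 0 < N j)
    (hNrec : ∀ j, N (j + 1) = Real.sqrt Δ / c (j + 1) - N j / (c (j + 1)) ^ 2)
    (hNbnd : ∀ j, Real.sqrt Δ / (c (j + 1) + 1) < N (j + 1) ∧
      N (j + 1) < Real.sqrt Δ / c (j + 1))
    (i : ℕ) (hi : Odd i) (huodd : Odd (u (i + 2)))
    (M : ℝ)
    (hM : 4 * M = 2 * (((u (i + 2) : ℝ) + 1) / (u (i + 2) : ℝ)) * N (i + 1)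
        + ((u (i + 2) : ℝ) ^ 2 - 1) * N (i + 2)
        + 2 * (((u (i + 2) : ℝ) - 1) / (u (i + 2) : ℝ)) * N (i + 3)) :
    (c (i + 2) - 2) * Real.sqrt Δ / 4 < M ∧ M < (c (i + 2) + 1) * Real.sqrt Δ / 4 := by
  have hs : 0 < Real.sqrt Δ := Real.sqrt_pos.mpr hΔ
  set s := Real.sqrt Δ with hsdef
  have ha : (1:ℝ) ≤ (u (i+2) : ℝ) := by exact_mod_cast hu (i+2)
  have hapos : (0:ℝ) < (u (i+2) : ℝ) := by linarith
  set a := (u (i+2) : ℝ) with hadef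
  have ht : 1 < c (i+3) := hc1 (i+3)
  set t := c (i+3) with htdef
  have htpos : (0:ℝ) < t := by linarith
  have hc2 : c (i+2) = a + 1/t := hc (i+2)
  have hc2pos : 0 < c (i+2) := by linarith [hc1 (i+2)]
  have hc2ne : c (i+2) ≠ 0 := ne_of_gt hc2pos
  have hN2lb : s / (c (i+2) + 1) < N (i+2) := (hNbnd (i+1)).1
  have hN2ub : N (i+2) < s / c (i+2) := (hNbnd (i+1)).2
  have h1 : N (i+1) = c (i+2) * s - c (i+2)^2 * N (i+2) := by
    have h := hNrec (i+1)
    field_simp at h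
    nlinarith [h]
  have h3 : N (i+3) = s / t - N (i+2) / t^2 := hNrec (i+2)
  set K : ℝ := c (i+2) + 1 + 1/t with hK
  have hkey : 4 * M = 2 * K * s - K^2 * N (i+2) := by
    rw [hM, h1, h3, hK, hc2]
    field_simp
    ring
  have hN2lb' : s / (c (i+2) + 1) < N (i+2) := hN2lb
  have hmul1 : N (i+2) * (c (i+2) + 1) > s := by
    have hpos : (0:ℝ) < c (i+2) + 1 := by linarith
    have := (div_lt_iff₀ hpos).mp hN2lb'
    linarith
  have hmul2 : N (i+2) * c (i+2) < s := by
    have := (lt_div_iff₀ hc2pos).mp hN2ub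
    linarith
  constructor
  · -- lower bound
    have hKc : 2 * K * c (i+2) - K^2 - (c (i+2)^2 - 2 * c (i+2)) = 2*a - 1 - 1/t^2 := by
      rw [hK, hc2]; field_simp; ring
    have htsq : 1/t^2 < 1 := by
      rw [div_lt_one (by positivity)]
      nlinarith
    have hcoef : 0 < 2 * K * c (i+2) - K^2 - (c (i+2)^2 - 2 * c (i+2)) := by
      rw [hKc]; linarith
    -- 4M = 2Ks - K² N₂ > 2Ks - K² s/c₂ ; and (2K - K²/c₂ - (c₂-2)) * s > 0
    have hKpos : 0 < K := by rw [hK]; positivity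
    have h4M : 4 * M > 2 * K * s - K^2 * (s / c (i+2)) := by
      rw [hkey]
      have : K^2 * N (i+2) < K^2 * (s / c (i+2)) := by
        apply mul_lt_mul_of_pos_left hN2ub (by positivity)
      linarith
    have : 2 * K * s - K^2 * (s / c (i+2)) > (c (i+2) - 2) * s := by
      rw [gt_iff_lt, ← sub_pos]
      have : 2 * K * s - K^2 * (s / c (i+2)) - (c (i+2) - 2) * s
          = (s / c (i+2)) * (2 * K * c (i+2) - K^2 - (c (i+2)^2 - 2 * c (i+2))) := by
        field_simp
      rw [this]
      positivity
    linarith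
  · -- upper bound
    have hc1pos : (0:ℝ) < c (i+2) + 1 := by linarith
    have hKc : (c (i+2) + 1)^2 - 2 * K * (c (i+2) + 1) + K^2 = 1/t^2 := by
      rw [hK]; field_simp; ring
    have h4M : 4 * M < 2 * K * s - K^2 * (s / (c (i+2) + 1)) := by
      rw [hkey]
      have : K^2 * (s / (c (i+2) + 1)) < K^2 * N (i+2) := by
        apply mul_lt_mul_of_pos_left hN2lb (by positivity)
      linarith
    have : 2 * K * s - K^2 * (s / (c (i+2) + 1)) < (c (i+2) + 1) * s := by
      rw [← sub_pos]
      have heq : (c (i+2) + 1) * s - (2 * K * s - K^2 * (s / (c (i+2) + 1)))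
          = (s / (c (i+2) + 1)) * ((c (i+2) + 1)^2 - 2 * K * (c (i+2) + 1) + K^2) := by
        field_simp; ring
      rw [heq, hKc]
      positivity
    linarith
end
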